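/- Define G(a,b) = (|a|² − |b|²)² − 2·Re[(a·conj(b))²] + 5|a|²|b|² for a = cos(θ/2), b = e^{-iφ} sin(θ/2). Then the maximum of G over all (θ, φ) ∈ [0,π]×[0,2π) equals 7/4, attained at θ = φ = π/2. -/

import Mathlib

/-! With `x = |a|²`, `y = |b|²` and `x + y = 1`, the loss coefficient is
`1 - 4xy - 2 Re((a b̄)²) + 5xy ≤ 1 + 3xy`, because `Re(z²) ≥ -|z|²`, and `xy ≤ 1/4`.
Both inequalities are equalities for `|a| = |b|` with `(a b̄)²` negative real,
e.g. `a = 1/√2`, `b = -i/√2`, which is `θ = φ = π/2`. -/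

open ComplexConjugate Real

/-- The coefficient of `p²` in the fidelity loss of the adaptive QEC protocol,
for the encoded state with `a = cos(θ/2)`, `b = e^{-iφ} sin(θ/2)`. -/
noncomputable def Gcoeff (θ φ : ℝ) : ℝ :=
  let a : ℂ := (Real.cos (θ / 2) : ℂ)
  let b : ℂ := Complex.exp (-(Complex.I * φ)) * (Real.sin (θ / 2) : ℂ)
  (‖a‖ ^ 2 - ‖b‖ ^ 2) ^ 2 - 2 * ((a * conj b) ^ 2).re + 5 * ‖a‖ ^ 2 * ‖b‖ ^ 2

noncomputable def fidelityLossCoeff (a b : ℂ) : ℝ :=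
  (‖a‖ ^ 2 - ‖b‖ ^ 2) ^ 2 - 2 * ((a * conj b) ^ 2).re + 5 * ‖a‖ ^ 2 * ‖b‖ ^ 2

theorem Gcoeff_eq_fidelityLossCoeff (θ φ : ℝ) :
    Gcoeff θ φ = fidelityLossCoeff (Real.cos (θ / 2))
      (Complex.exp (-(Complex.I * φ)) * Real.sin (θ / 2)) :=
  rfl

theorem Complex.neg_sq_norm_le_re_sq (z : ℂ) : -‖z‖ ^ 2 ≤ (z ^ 2).re := by
  rw [← norm_pow]
  exact neg_le_of_abs_le (Complex.abs_re_le_norm _)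

theorem fidelityLossCoeff_le {a b : ℂ} (hab : ‖a‖ ^ 2 + ‖b‖ ^ 2 = 1) :
    fidelityLossCoeff a b ≤ 7 / 4 := by
  have hre : -(‖a‖ ^ 2 * ‖b‖ ^ 2) ≤ ((a * conj b) ^ 2).re := by
    simpa [mul_pow] using Complex.neg_sq_norm_le_re_sq (a * conj b)
  unfold fidelityLossCoeff
  nlinarith [sq_nonneg (‖a‖ ^ 2 - ‖b‖ ^ 2)]

theorem sq_norm_cos_add_sq_norm_exp_mul_sin (θ φ : ℝ) :
    ‖(Real.cos θ : ℂ)‖ ^ 2 + ‖Complex.exp (-(Complex.I * φ)) * Real.sin θ‖ ^ 2 = 1 := by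
  have hphase : ‖Complex.exp (-(Complex.I * φ))‖ = 1 := by
    rw [Complex.norm_exp]
    simp
  rw [norm_mul, hphase, one_mul, Complex.norm_real, Complex.norm_real, Real.norm_eq_abs,
    Real.norm_eq_abs, sq_abs, sq_abs, cos_sq_add_sin_sq]

theorem fidelityLossCoeff_ofReal_neg_I_mul (r : ℝ) :
    fidelityLossCoeff r (-Complex.I * r) = 7 * r ^ 4 := by
  have hprod : ((r : ℂ) * conj (-Complex.I * r)) ^ 2 = ((-r ^ 4 : ℝ) : ℂ) := by
    simp only [map_mul, map_neg, Complex.conj_I, Complex.conj_ofReal]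
    push_cast
    ring_nf
    simp [Complex.I_sq]
  rw [fidelityLossCoeff, hprod, Complex.ofReal_re, norm_mul, norm_neg, Complex.norm_I,
    one_mul, Complex.norm_real, Real.norm_eq_abs, sq_abs]
  ring

theorem Gcoeff_pi_div_two : Gcoeff (π / 2) (π / 2) = 7 / 4 := by
  have hphase : Complex.exp (-(Complex.I * (π / 2 : ℝ))) = -Complex.I := by
    rw [show -(Complex.I * (π / 2 : ℝ)) = (-(π / 2) : ℝ) * Complex.I by push_cast; ring,
      Complex.exp_mul_I]
    simp
  have hquarter : π / 2 / 2 = π / 4 := by ring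
  have hsqrt : √2 ^ 2 = 2 := Real.sq_sqrt zero_le_two
  rw [Gcoeff_eq_fidelityLossCoeff, hphase, hquarter, cos_pi_div_four, sin_pi_div_four,
    fidelityLossCoeff_ofReal_neg_I_mul]
  nlinarith [hsqrt]

theorem Gcoeff_max :
    Gcoeff (Real.pi / 2) (Real.pi / 2) = 7 / 4 ∧
    ∀ θ φ : ℝ, 0 ≤ θ → θ ≤ Real.pi → 0 ≤ φ → φ < 2 * Real.pi →
      Gcoeff θ φ ≤ 7 / 4 :=
  ⟨Gcoeff_pi_div_two, fun θ φ _ _ _ _ => by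
    rw [Gcoeff_eq_fidelityLossCoeff]
    exact fidelityLossCoeff_le (sq_norm_cos_add_sq_norm_exp_mul_sin _ _)⟩
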